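/- The four Laurent polynomials A, σ(A), C, σ(C) ∈ S are algebraically independent over ℤ: the ℤ-algebra homomorphism from the polynomial ring ℤ[x₁,x₂,x₃,x₄] to S sending x₁ ↦ A, x₂ ↦ σ(A), x₃ ↦ C, x₄ ↦ σ(C) is injective. (This is the character-level form of the isomorphism K₀(𝒞_{ε^ℤ}) ≅ ℤ[[L(Y_{1,0})],[L(Y_{1,2})],[L(Y_{2,1})],[L(Y_{2,3})]] for U_ε^res(L sl₃) with l = 2.) -/

import Mathlib

/-!
`S = ℤ[Y10^{±1}, Y12^{±1}, Y21^{±1}, Y23^{±1}]` is the Laurent polynomial ring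
over `ℤ` in four commuting variables, realised as the group algebra of the free
abelian group `Fin 4 →₀ ℤ`; the indices `0, 1, 2, 3` correspond to the variables
`Y10, Y12, Y21, Y23` respectively (`Yin = Y_{i,ε^n}`, `ε` a primitive fourth
root of unity; this is the case `g = sl₃`, `l = 2`).
-/

/-- The Laurent polynomial ring `ℤ[Y10^{±1}, Y12^{±1}, Y21^{±1}, Y23^{±1}]`. -/
abbrev S : Type := AddMonoidAlgebra ℤ (Fin 4 →₀ ℤ)

/-- The monomial which is the `e`-th power of the `i`-th variable
(`i = 0, 1, 2, 3` for `Y10, Y12, Y21, Y23`). -/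
noncomputable def Yv (i : Fin 4) (e : ℤ) : S :=
  AddMonoidAlgebra.single (Finsupp.single i e) 1

/-- `A = Y10 + Y21·Y12⁻¹ + Y23⁻¹`, the `ε`-character of `L(Y_{1,0})`. -/
noncomputable def A : S := Yv 0 1 + Yv 2 1 * Yv 1 (-1) + Yv 3 (-1)

/-- `B`, the `ε`-character of `L(Y_{1,0}Y_{2,1})`. -/
noncomputable def B : S :=
  Yv 0 1 * Yv 2 1 + Yv 0 1 * Yv 1 1 * Yv 3 (-1) + Yv 2 1 ^ 2 * Yv 1 (-1) +
    2 * (Yv 2 1 * Yv 3 (-1)) + Yv 2 1 * Yv 0 (-1) * Yv 1 (-1) +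
    Yv 1 1 * Yv 3 (-2) + Yv 0 (-1) * Yv 3 (-1)

/-- `C = Y21 + Y12·Y23⁻¹ + Y10⁻¹`, the `ε`-character of `L(Y_{2,1})`. -/
noncomputable def C : S := Yv 2 1 + Yv 1 1 * Yv 3 (-1) + Yv 0 (-1)

/-- `Λ₁ = Y10·Y12 + Y21·Y23·Y10⁻¹·Y12⁻¹ + Y21⁻¹·Y23⁻¹`, the `ε`-character of `L(𝐘₁)`. -/
noncomputable def Lam1 : S :=
  Yv 0 1 * Yv 1 1 + Yv 2 1 * Yv 3 1 * Yv 0 (-1) * Yv 1 (-1) + Yv 2 (-1) * Yv 3 (-1)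

/-- `Λ₂ = Y21·Y23 + Y10·Y12·Y21⁻¹·Y23⁻¹ + Y10⁻¹·Y12⁻¹`, the `ε`-character of `L(𝐘₂)`. -/
noncomputable def Lam2 : S :=
  Yv 2 1 * Yv 3 1 + Yv 0 1 * Yv 1 1 * Yv 2 (-1) * Yv 3 (-1) + Yv 0 (-1) * Yv 1 (-1)

/-- The ring automorphism `σ` of `S` determined by `σ(Y10)=Y12`, `σ(Y12)=Y10`,
`σ(Y21)=Y23`, `σ(Y23)=Y21` (shift of the spectral parameter by `ε²`). -/
noncomputable def σ : S ≃ₐ[ℤ] S :=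
  AddMonoidAlgebra.domCongr ℤ ℤ
    (Finsupp.domCongr (M := ℤ) ((Equiv.swap (0 : Fin 4) 1).trans (Equiv.swap 2 3)))


/-!
Multiplying by `U = Y10·Y12·Y21·Y23` turns each of `A, σ(A), C, σ(C)` into a polynomial
`gᵢ = Yᵢ·U + (terms of total degree < 5)`, so for the deg-lex order on monomials `gᵢ` is monic
with leading monomial `Yᵢ·U`. If `p ≠ 0` has total degree `d`, then `U^d · p(A, σA, C, σC)` is
the value at `(U, g)` of the degree-`d` homogenization of `p`; there the monomial `xⁿ` of `p`
contributes a term with leading monomial `U^d·Yⁿ`. These are pairwise distinct, so the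
contributions cannot cancel and `p(A, σA, C, σC) ≠ 0`.
-/

open scoped MonomialOrder

namespace MvPolynomial

variable {ι R : Type*} [CommSemiring R]

noncomputable def toLaurent : MvPolynomial ι R →ₐ[R] AddMonoidAlgebra R (ι →₀ ℤ) :=
  AddMonoidAlgebra.mapDomainAlgHom R R (Finsupp.mapRange.addMonoidHom (Nat.castAddMonoidHom ℤ))

theorem toLaurent_injective : Function.Injective (toLaurent : MvPolynomial ι R → _) :=
  AddMonoidAlgebra.mapDomain_injective
    (Finsupp.mapRange_injective _ Nat.cast_zero Nat.cast_injective)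

theorem toLaurent_X (i : ι) :
    toLaurent (X i : MvPolynomial ι R) = AddMonoidAlgebra.single (Finsupp.single i 1) 1 := by
  simp [toLaurent, X, monomial]

variable {T T' : Type*} [CommSemiring T] [Algebra R T] [CommSemiring T'] [Algebra R T']

/-- `u ^ d * p (g / u)`, the value at `(u, g)` of the degree-`d` homogenization of `p`, written
without division. Because `d - n.degree` truncates, this reading needs `p.totalDegree ≤ d`. -/
noncomputable def evalHomog (d : ℕ) (u : T) (g : ι → T) (p : MvPolynomial ι R) : T :=
  ∑ n ∈ p.support, algebraMap R T (p.coeff n) * (∏ i ∈ n.support, g i ^ n i) * u ^ (d - n.degree)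

theorem map_evalHomog (φ : T →ₐ[R] T') (d : ℕ) (u : T) (g : ι → T) (p : MvPolynomial ι R) :
    φ (evalHomog d u g p) = evalHomog d (φ u) (fun i => φ (g i)) p := by
  simp [evalHomog, map_prod]

theorem evalHomog_mul_eq {d : ℕ} {p : MvPolynomial ι R} (hd : p.totalDegree ≤ d) (u : T)
    (f : ι → T) : evalHomog d u (fun i => f i * u) p = aeval f p * u ^ d := by
  rw [evalHomog, aeval_def, eval₂_eq, Finset.sum_mul]
  refine Finset.sum_congr rfl fun n hn => ?_
  have hn : n.degree ≤ d := (le_totalDegree hn).trans hd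
  simp only [mul_pow, Finset.prod_mul_distrib, Finset.prod_pow_eq_pow_sum]
  rw [← Finsupp.degree_apply, ← pow_mul_pow_sub u hn]
  ring

end MvPolynomial

namespace MonomialOrder

open MvPolynomial

variable {ι : Type*}

section

variable {R : Type*} [CommSemiring R] {m : MonomialOrder ι}

variable (m) in
theorem sum_ne_zero_of_injOn_degree {α : Type*} {s : Finset α} {f : α → MvPolynomial ι R}
    (hs : s.Nonempty) (hf : ∀ a ∈ s, f a ≠ 0) (hinj : Set.InjOn (fun a => m.degree (f a)) s) :
    ∑ a ∈ s, f a ≠ 0 := by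
  obtain ⟨a, ha, hmax⟩ := s.exists_max_image (fun a => m.toSyn (m.degree (f a))) hs
  have hlt (b) (hb : b ∈ s) (hba : b ≠ a) : m.degree (f b) ≺[m] m.degree (f a) :=
    (hmax b hb).lt_of_ne fun h => hba (hinj hb ha (m.toSyn.injective h))
  intro hsum
  have hcoeff := congrArg (coeff (m.degree (f a))) hsum
  rw [coeff_sum, coeff_zero,
    Finset.sum_eq_single_of_mem a ha fun b hb hba => m.coeff_eq_zero_of_lt (hlt b hb hba)] at hcoeff
  exact m.coeff_degree_ne_zero_iff.2 (hf a ha) hcoeff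

theorem degLex_lt_of_totalDegree_lt [LinearOrder ι] [WellFoundedGT ι] {f g : MvPolynomial ι R}
    (h : f.totalDegree < g.totalDegree) : degLex.degree f ≺[degLex] degLex.degree g := by
  rw [degLex_lt_iff, Finsupp.DegLex.lt_iff]
  left
  simpa [degree_degLexDegree] using h

theorem Monic.isRegular_leadingCoeff {f : MvPolynomial ι R} (hf : m.Monic f) :
    IsRegular (m.leadingCoeff f) :=
  hf.leadingCoeff_eq_one ▸ isRegular_one

theorem Monic.C_mul_ne_zero {f : MvPolynomial ι R} (hf : m.Monic f) {c : R} (hc : c ≠ 0) :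
    C c * f ≠ 0 := by
  rw [← m.leadingCoeff_ne_zero_iff, m.leadingCoeff_mul_of_isRegular_right hf.isRegular_leadingCoeff,
    hf.leadingCoeff_eq_one, mul_one, leadingCoeff_C]
  exact hc

theorem Monic.degree_C_mul {f : MvPolynomial ι R} (hf : m.Monic f) {c : R} (hc : c ≠ 0) :
    m.degree (C c * f) = m.degree f := by
  rw [m.degree_mul_of_isRegular_right (C_ne_zero.2 hc) hf.isRegular_leadingCoeff, degree_C,
    zero_add]

theorem Monic.degree_pow [Nontrivial R] {f : MvPolynomial ι R} (hf : m.Monic f) (k : ℕ) :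
    m.degree (f ^ k) = k • m.degree f :=
  m.degree_pow_of_pow_leadingCoeff_ne_zero (by simp [hf.leadingCoeff_eq_one])

section Homogenization

variable [Nontrivial R] {u : MvPolynomial ι R} {g : ι → MvPolynomial ι R}
  (hu : m.Monic u) (hg : ∀ i, m.Monic (g i))
  (hdeg : ∀ i, m.degree (g i) = m.degree u + Finsupp.single i 1)
include hu hg hdeg

theorem degree_prod_pow_mul_pow {d : ℕ} {n : ι →₀ ℕ} (hn : n.degree ≤ d) :
    m.degree ((∏ i ∈ n.support, g i ^ n i) * u ^ (d - n.degree)) = d • m.degree u + n := by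
  have hprod : m.Monic (∏ i ∈ n.support, g i ^ n i) := Monic.prod fun i _ => (hg i).pow
  rw [m.degree_mul_of_isRegular_left hprod.isRegular_leadingCoeff hu.pow.ne_zero,
    m.degree_prod_of_regular fun i _ => (hg i).pow.isRegular_leadingCoeff, hu.degree_pow]
  simp only [(hg _).degree_pow, hdeg, smul_add, Finset.sum_add_distrib, ← Finset.sum_smul,
    ← Finsupp.degree_apply, Finsupp.smul_single_one]
  rw [add_right_comm, ← add_smul, Nat.add_sub_cancel' hn]
  congr 1
  exact n.sum_single

theorem evalHomog_ne_zero {d : ℕ} {p : MvPolynomial ι R} (hp : p ≠ 0) (hd : p.totalDegree ≤ d) :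
    evalHomog d u g p ≠ 0 := by
  simp only [evalHomog, algebraMap_eq, mul_assoc]
  have hmonic (n : ι →₀ ℕ) : m.Monic ((∏ i ∈ n.support, g i ^ n i) * u ^ (d - n.degree)) :=
    (Monic.prod fun i _ => (hg i).pow).mul hu.pow
  have hdeg_term (n) (hn : n ∈ p.support) :
      m.degree (C (p.coeff n) * ((∏ i ∈ n.support, g i ^ n i) * u ^ (d - n.degree))) =
        d • m.degree u + n := by
    rw [(hmonic n).degree_C_mul (mem_support_iff.1 hn),
      degree_prod_pow_mul_pow hu hg hdeg ((le_totalDegree hn).trans hd)]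
  refine sum_ne_zero_of_injOn_degree m (support_nonempty.2 hp)
    (fun n hn => (hmonic n).C_mul_ne_zero (mem_support_iff.1 hn)) fun n hn n' hn' h => ?_
  simpa [hdeg_term n hn, hdeg_term n' hn'] using h

end Homogenization

end

theorem aeval_injective_of_map_eq_mul {R T : Type*} [CommRing R] [CommSemiring T] [Algebra R T]
    (m : MonomialOrder ι) {φ : MvPolynomial ι R →ₐ[R] T} (hφ : Function.Injective φ) {f : ι → T}
    {u : MvPolynomial ι R} {g : ι → MvPolynomial ι R} (hu : m.Monic u) (hg : ∀ i, m.Monic (g i))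
    (hdeg : ∀ i, m.degree (g i) = m.degree u + Finsupp.single i 1)
    (hfg : ∀ i, φ (g i) = f i * φ u) :
    Function.Injective (aeval f : MvPolynomial ι R →ₐ[R] T) := by
  nontriviality R
  refine (injective_iff_map_eq_zero _).2 fun p hp => by_contra fun hp0 => ?_
  apply evalHomog_ne_zero hu hg hdeg hp0 le_rfl
  apply hφ
  simp only [map_evalHomog, hfg, evalHomog_mul_eq le_rfl, hp, zero_mul, map_zero]

end MonomialOrder

section Characters

open MvPolynomial MonomialOrder

theorem σ_Yv (i : Fin 4) (e : ℤ) :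
    σ (Yv i e) = Yv ((Equiv.swap 0 1).trans (Equiv.swap 2 3) i) e := by
  simp [σ, Yv]

theorem Yv_neg_one_mul (i : Fin 4) : Yv i (-1) * Yv i 1 = 1 := by
  simp [Yv, AddMonoidAlgebra.single_mul_single, AddMonoidAlgebra.one_def]

theorem σ_A : σ A = Yv 1 1 + Yv 3 1 * Yv 0 (-1) + Yv 2 (-1) := by
  simp [A, σ_Yv, Equiv.swap_apply_def]

theorem σ_C : σ C = Yv 3 1 + Yv 0 1 * Yv 2 (-1) + Yv 1 (-1) := by
  simp [_root_.C, σ_Yv, Equiv.swap_apply_def]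

theorem toLaurent_X_eq_Yv (i : Fin 4) : toLaurent (X i : MvPolynomial (Fin 4) ℤ) = Yv i 1 :=
  toLaurent_X i

noncomputable def prodX : MvPolynomial (Fin 4) ℤ := X 0 * X 1 * X 2 * X 3

noncomputable def charNumeratorTail : Fin 4 → MvPolynomial (Fin 4) ℤ :=
  ![X 0 * X 2 ^ 2 * X 3 + X 0 * X 1 * X 2, X 1 * X 2 * X 3 ^ 2 + X 0 * X 1 * X 3,
    X 0 * X 1 ^ 2 * X 2 + X 1 * X 2 * X 3, X 0 ^ 2 * X 1 * X 3 + X 0 * X 2 * X 3]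

noncomputable def charNumerator (i : Fin 4) : MvPolynomial (Fin 4) ℤ :=
  X i * prodX + charNumeratorTail i

theorem toLaurent_charNumerator (i : Fin 4) :
    toLaurent (charNumerator i) = ![A, σ A, C, σ C] i * toLaurent prodX := by
  fin_cases i <;>
    simp only [charNumerator, charNumeratorTail, prodX, map_add, map_mul, map_pow,
      toLaurent_X_eq_Yv, Fin.reduceFinMk, Fin.isValue, Matrix.cons_val, σ_A, σ_C] <;>
    grind [A, _root_.C, Yv_neg_one_mul]

theorem monic_prodX : degLex.Monic prodX :=
  ((monic_X.mul monic_X).mul monic_X).mul monic_X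

theorem totalDegree_X_mul_prodX (i : Fin 4) : (X i * prodX).totalDegree = 5 := by
  simp [prodX, totalDegree_mul_of_isDomain, X_ne_zero]

theorem totalDegree_charNumeratorTail_lt (i : Fin 4) : (charNumeratorTail i).totalDegree < 5 := by
  fin_cases i <;>
  · simp only [charNumeratorTail, Fin.reduceFinMk, Matrix.cons_val, Fin.isValue]
    grw [totalDegree_add, max_lt_iff]
    constructor <;>
    · repeat grw [totalDegree_mul]
      simp

theorem degree_charNumeratorTail_lt (i : Fin 4) :
    degLex.degree (charNumeratorTail i) ≺[degLex] degLex.degree (X i * prodX) :=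
  degLex_lt_of_totalDegree_lt
    ((totalDegree_charNumeratorTail_lt i).trans_eq (totalDegree_X_mul_prodX i).symm)

theorem monic_charNumerator (i : Fin 4) : degLex.Monic (charNumerator i) :=
  (monic_X.mul monic_prodX).add_of_lt (degree_charNumeratorTail_lt i)

theorem degree_charNumerator (i : Fin 4) :
    degLex.degree (charNumerator i) = degLex.degree prodX + Finsupp.single i 1 := by
  rw [charNumerator, degree_add_of_lt (degree_charNumeratorTail_lt i),
    degree_mul_of_isRegular_left monic_X.isRegular_leadingCoeff monic_prodX.ne_zero, degree_X,
    add_comm]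

end Characters

/-- The four fundamental characters `A, σ(A), C, σ(C)` are algebraically
independent over `ℤ`: the `ℤ`-algebra homomorphism `ℤ[x₁,x₂,x₃,x₄] → S` sending
`x₁ ↦ A`, `x₂ ↦ σ(A)`, `x₃ ↦ C`, `x₄ ↦ σ(C)` is injective. -/
theorem fundamental_characters_independent :
    Function.Injective
      (MvPolynomial.aeval (fun i : Fin 4 => ![A, σ A, C, σ C] i) :
        MvPolynomial (Fin 4) ℤ →ₐ[ℤ] S) :=
  MonomialOrder.degLex.aeval_injective_of_map_eq_mul MvPolynomial.toLaurent_injective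
    monic_prodX monic_charNumerator degree_charNumerator toLaurent_charNumerator
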